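/- arXiv:1907.04784 — 4 statements merged into one kernel-verified Lean document; each statement's English description precedes it below -/
import Mathlib

section
/- An m×l AWG (with l ≥ m, N = ml) is functionally equivalent to the generalized shuffle network N(m,l): the map sending the AWG connection from input channel (p, λ_{(p+q) mod l}) at input p to output channel (q, λ_{(p+q) mod l}) at output q, to the shuffle connection from input address (p,q) to output address (q,p), is a bijection between the connection sets of the two networks. -/
/-- Functional equivalence between an `m×l` AWG (with `l ≥ m`) and the generalized
shuffle network `N(m,l)`: the map sending the AWG connection
`(p, q, λ_{(p+q) mod l})` (from input channel `(p, λ_{(p+q) mod l})` to output channel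
`(q, λ_{(p+q) mod l})`) to the shuffle connection from input address `(p,q)` to output
address `(q,p)` is a bijection between the connection sets of the two networks. -/
theorem awg_equiv_shuffle (m l : ℕ) (hml : m ≤ l) (hl : 0 < l) :
    Function.Bijective
      (fun c : {c : Fin m × Fin l × Fin l // (c.2.2 : ℕ) = ((c.1 : ℕ) + (c.2.1 : ℕ)) % l} =>
        (⟨((c.1.1, c.1.2.1), (c.1.2.1, c.1.1)), rfl, rfl⟩ :
          {s : (Fin m × Fin l) × (Fin l × Fin m) // s.2.1 = s.1.2 ∧ s.2.2 = s.1.1})) := by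
  constructor
  · rintro ⟨⟨p, q, w⟩, h⟩ ⟨⟨p', q', w'⟩, h'⟩ heq
    simp only [Subtype.mk.injEq, Prod.mk.injEq] at heq
    obtain ⟨⟨hp, hq⟩, _⟩ := heq
    subst hp hq
    have : w = w' := Fin.ext (h.trans h'.symm)
    subst this
    rfl
  · rintro ⟨⟨⟨p, q⟩, ⟨a, b⟩⟩, h1, h2⟩
    simp only at h1 h2
    subst h1 h2
    exact ⟨⟨(b, a, ⟨((b : ℕ) + a) % l, Nat.mod_lt _ hl⟩), rfl⟩, rfl⟩
end

section
/- W(m,rm) is equivalent to the shuffle network N(m,rm): the map sending the W(m,rm) connection from input channel with field address (p,a,q') to output channel with field address (a,q',p) via wavelength λ_{(p+q') mod m}, to the N(m,rm) connection from input (p, am+q') to output (am+q', p), is a bijection between the connection sets, and under it input channel address p·rm + (am+q') is connected to output channel address (am+q')·m + p, i.e., the two sub-addresses (group, port) are exchanged. -/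
lemma divmod_unique_aux {n a b c d : ℕ} (hn : 0 < n) (hb : b < n) (hd : d < n)
    (h : a * n + b = c * n + d) : a = c ∧ b = d := by
  have h1 : a = c := by
    have e1 : (a * n + b) / n = a := by
      rw [Nat.mul_comm a n, Nat.mul_add_div hn, Nat.div_eq_of_lt hb, Nat.add_zero]
    have e2 : (c * n + d) / n = c := by
      rw [Nat.mul_comm c n, Nat.mul_add_div hn, Nat.div_eq_of_lt hd, Nat.add_zero]
    rw [← e1, h, e2]
  refine ⟨h1, ?_⟩
  subst h1
  omega

/-- `W(m,rm)` is equivalent to the shuffle network `N(m,rm)`: the map sending the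
`W(m,rm)` connection with input channel field address `(p,a,q')` (via wavelength
`λ_{(p+q') mod m}`) to the `N(m,rm)` connection from input channel address
`p·rm + (am+q')` to output channel address `(am+q')·m + p` (the two sub-addresses
group/port exchanged) is a bijection between the connection sets. -/
theorem modular_shuffle_equiv_shuffle (m r : ℕ) (hm : 0 < m) (hr : 0 < r) :
    Function.Bijective
      (fun c : Fin m × Fin r × Fin m =>
        (⟨((c.1 : ℕ) * (r * m) + ((c.2.1 : ℕ) * m + (c.2.2 : ℕ)),
           ((c.2.1 : ℕ) * m + (c.2.2 : ℕ)) * m + (c.1 : ℕ)),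
          ⟨(c.1 : ℕ), c.1.isLt, (c.2.1 : ℕ) * m + (c.2.2 : ℕ),
            by
              have h1 := c.2.1.isLt
              have h2 := c.2.2.isLt
              calc (c.2.1 : ℕ) * m + (c.2.2 : ℕ) < (c.2.1 : ℕ) * m + m := by omega
                _ = ((c.2.1 : ℕ) + 1) * m := by ring
                _ ≤ r * m := Nat.mul_le_mul_right m h1,
            rfl, rfl⟩⟩ :
          {io : ℕ × ℕ // ∃ p < m, ∃ q < r * m, io.1 = p * (r * m) + q ∧ io.2 = q * m + p})) := by
  constructor
  · rintro ⟨p1, a1, q1⟩ ⟨p2, a2, q2⟩ h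
    have hv : ((p1 : ℕ) * (r * m) + ((a1 : ℕ) * m + (q1 : ℕ)),
        ((a1 : ℕ) * m + (q1 : ℕ)) * m + (p1 : ℕ)) =
        ((p2 : ℕ) * (r * m) + ((a2 : ℕ) * m + (q2 : ℕ)),
        ((a2 : ℕ) * m + (q2 : ℕ)) * m + (p2 : ℕ)) := congrArg Subtype.val h
    have h2 : ((a1 : ℕ) * m + (q1 : ℕ)) * m + (p1 : ℕ) =
        ((a2 : ℕ) * m + (q2 : ℕ)) * m + (p2 : ℕ) := congrArg Prod.snd hv
    have hk := divmod_unique_aux hm p1.isLt p2.isLt h2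
    have hk2 := divmod_unique_aux hm q1.isLt q2.isLt hk.1
    exact Prod.ext (Fin.ext hk.2) (Prod.ext (Fin.ext hk2.1) (Fin.ext hk2.2))
  · rintro ⟨io, p, hp, q, hq, e1, e2⟩
    refine ⟨⟨⟨p, hp⟩, ⟨q / m, Nat.div_lt_of_lt_mul (Nat.mul_comm r m ▸ hq)⟩,
      ⟨q % m, Nat.mod_lt _ hm⟩⟩, ?_⟩
    apply Subtype.ext
    have hdm : q / m * m + q % m = q := by
      rw [Nat.mul_comm]; exact Nat.div_add_mod q m
    simp only
    rw [hdm]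
    exact Prod.ext e1.symm e2.symm
end

section
/- After k shuffle-exchange steps with destination digits d, the intermediate address of request (S,D) is X_k = s_{n-k} ⋯ s_1 d_n ⋯ d_{n-k+1}; hence two requests (S,D) and (S',D') collide at the input of stage k+1 (i.e., X_{k+1}-prefix addresses agree including the last substituted digit) only if s'_{n-k-1}⋯s'_1 = s_{n-k-1}⋯s_1, d'_n⋯d'_{n-k+1} = d_n⋯d_{n-k+1}, and d'_{n-k} = d_{n-k}, while s'_{n-k} ≠ s_{n-k}. -/
/-- Collision analysis: two requests `(s,d)` and `(s',d')` that occupy the same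
wavelength channel at the input of stage `k+1` (equal intermediate addresses
`X_{k+1} = s_{n-k-1}⋯s_1 d_n⋯d_{n-k}` after the exchange at boundary `k`) while
having come from different channels at stage `k` (`X_k ≠ X'_k`) must satisfy:
the lower `n-k-1` source digits agree, the top `k+1` destination digits agree,
and `s_{n-k} ≠ s'_{n-k}`. -/
theorem sen_collision_digits (m n k : ℕ) (hm : 0 < m) (hk : k < n)
    (s d s' d' : Fin n → Fin m)
    (hcol : ∀ i : Fin n,
      (if h : (i : ℕ) < k + 1 then d ⟨n - (k + 1) + (i : ℕ), by have := i.isLt; omega⟩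
       else s ⟨(i : ℕ) - (k + 1), by have := i.isLt; omega⟩)
      = (if h : (i : ℕ) < k + 1 then d' ⟨n - (k + 1) + (i : ℕ), by have := i.isLt; omega⟩
         else s' ⟨(i : ℕ) - (k + 1), by have := i.isLt; omega⟩))
    (hdiff : ∃ i : Fin n,
      (if h : (i : ℕ) < k then d ⟨n - k + (i : ℕ), by have := i.isLt; omega⟩
       else s ⟨(i : ℕ) - k, by have := i.isLt; omega⟩)
      ≠ (if h : (i : ℕ) < k then d' ⟨n - k + (i : ℕ), by have := i.isLt; omega⟩
         else s' ⟨(i : ℕ) - k, by have := i.isLt; omega⟩)) :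
    (∀ i : Fin n, (i : ℕ) < n - k - 1 → s i = s' i) ∧
    (∀ i : Fin n, n - k - 1 ≤ (i : ℕ) → d i = d' i) ∧
    s ⟨n - k - 1, by omega⟩ ≠ s' ⟨n - k - 1, by omega⟩ := by
  have hs : ∀ i : Fin n, (i : ℕ) < n - k - 1 → s i = s' i := by
    intro i hi
    have h := hcol ⟨(i : ℕ) + (k + 1), by omega⟩
    simp only [dif_neg (show ¬ (i : ℕ) + (k + 1) < k + 1 by omega)] at h
    simpa using h
  have hd : ∀ i : Fin n, n - k - 1 ≤ (i : ℕ) → d i = d' i := by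
    intro i hi
    have hlt := i.isLt
    have h := hcol ⟨(i : ℕ) - (n - k - 1), by omega⟩
    simp only [dif_pos (show (i : ℕ) - (n - k - 1) < k + 1 by omega)] at h
    have : (⟨n - (k + 1) + ((i : ℕ) - (n - k - 1)), by omega⟩ : Fin n) = i := by
      simp [Fin.ext_iff]; omega
    rwa [this] at h
  refine ⟨hs, hd, ?_⟩
  intro heq
  obtain ⟨i, hi⟩ := hdiff
  by_cases hik : (i : ℕ) < k
  · apply hi
    simp only [dif_pos hik]
    exact hd _ (show n - k - 1 ≤ n - k + (i : ℕ) by omega)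
  · apply hi
    simp only [dif_neg hik]
    by_cases hlast : (i : ℕ) - k = n - k - 1
    · have : (⟨(i : ℕ) - k, by have := i.isLt; omega⟩ : Fin n)
          = (⟨n - k - 1, by omega⟩ : Fin n) := by simp [Fin.ext_iff, hlast]
      rw [this]; rw [heq]
    · exact hs _ (show (i : ℕ) - k < n - k - 1 by have := i.isLt; omega)
end

section
/- Full utilization: when all mⁿ input wavelength channels of S(m,n) carry connections satisfying the nonblocking conditions (e.g., the identity or any concentrated monotone permutation on all mⁿ addresses), every one of the mⁿ wavelength channels of each shuffle stage is used by exactly one connection, i.e., at each stage k the map (S,D) ↦ X_k from requests to intermediate addresses is a bijection onto {0,...,mⁿ-1}. -/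
/-- Strictly monotone functions on `Iio N` grow at least as fast as identity. -/
lemma mono_gap {N : ℕ} {σ : ℕ → ℕ} (h : StrictMonoOn σ (Set.Iio N)) :
    ∀ b, b < N → ∀ a, a < N → a ≤ b → σ a + (b - a) ≤ σ b := by
  intro b
  induction b with
  | zero =>
      intro _ a _ hab
      obtain rfl : a = 0 := by omega
      omega
  | succ c ih =>
      intro hb a ha hab
      rcases Nat.lt_or_ge a (c+1) with hlt | hge
      · have hc : c < N := by omega
        have h1 := ih hc a ha (by omega)
        have h2 : σ c < σ (c+1) := h hc hb (by omega)
        omega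
      · have : a = c + 1 := by omega
        subst this; omega

/-- Strictly antitone functions on `Iio N` decrease at least as fast as identity. -/
lemma anti_gap {N : ℕ} {σ : ℕ → ℕ} (h : StrictAntiOn σ (Set.Iio N)) :
    ∀ b, b < N → ∀ a, a < N → a ≤ b → σ b + (b - a) ≤ σ a := by
  intro b
  induction b with
  | zero =>
      intro _ a _ hab
      obtain rfl : a = 0 := by omega
      omega
  | succ c ih =>
      intro hb a ha hab
      rcases Nat.lt_or_ge a (c+1) with hlt | hge
      · have hc : c < N := by omega
        have h1 := ih hc a ha (by omega)
        have h2 : σ (c+1) < σ c := h hc hb (by omega)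
        omega
      · have : a = c + 1 := by omega
        subst this; omega

/-- Full utilization: when all `mⁿ` input channels of `S(m,n)` carry connections given by
a strictly monotone (increasing or decreasing) permutation `σ` of the address set
`{0,...,mⁿ-1}`, then at each stage `k` the map `S ↦ X_k(S, σ S)` from requests to
intermediate addresses, `X_k = (S mod m^{n-k})·m^k + σ S / m^{n-k}`, is a bijection of
`{0,...,mⁿ-1}` onto itself: every wavelength channel of each shuffle stage is used by
exactly one connection. -/
theorem sen_full_utilization (m n k : ℕ) (hm : 0 < m) (hn : 0 < n) (hk : k ≤ n)
    (σ : ℕ → ℕ)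
    (hbij : Set.BijOn σ (Set.Iio (m ^ n)) (Set.Iio (m ^ n)))
    (hmono : StrictMonoOn σ (Set.Iio (m ^ n)) ∨ StrictAntiOn σ (Set.Iio (m ^ n))) :
    Set.BijOn (fun S => (S % m ^ (n - k)) * m ^ k + σ S / m ^ (n - k))
      (Set.Iio (m ^ n)) (Set.Iio (m ^ n)) := by
  set q := m ^ (n - k) with hq
  set M := m ^ k with hM
  have hqM : q * M = m ^ n := by rw [hq, hM, ← pow_add]; congr 1; omega
  have hqpos : 0 < q := pow_pos hm _
  have hMpos : 0 < M := pow_pos hm _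
  have hσlt : ∀ S, S < m ^ n → σ S < m ^ n := fun S hS => hbij.mapsTo hS
  have hMq : M * q = m ^ n := by rw [mul_comm]; exact hqM
  have hdiv : ∀ S, S < m ^ n → σ S / q < M := by
    intro S hS
    have := hσlt S hS
    rw [Nat.div_lt_iff_lt_mul hqpos]
    omega
  have hmaps : Set.MapsTo (fun S => (S % q) * M + σ S / q)
      (Set.Iio (m ^ n)) (Set.Iio (m ^ n)) := by
    intro S hS
    simp only [Set.mem_Iio] at *
    have h1 : S % q < q := Nat.mod_lt _ hqpos
    have h2 := hdiv S hS
    have h3 : (S % q) * M + M ≤ q * M := by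
      have h4 : (S % q + 1) * M ≤ q * M := Nat.mul_le_mul_right _ (by omega)
      rw [add_mul, one_mul] at h4
      exact h4
    omega
  have hinj : Set.InjOn (fun S => (S % q) * M + σ S / q) (Set.Iio (m ^ n)) := by
    intro S1 hS1 S2 hS2 heq
    simp only [Set.mem_Iio] at hS1 hS2
    simp only at heq
    have d1 := hdiv S1 hS1
    have d2 := hdiv S2 hS2
    -- extract both components
    have hdeq : σ S1 / q = σ S2 / q := by
      have h := congrArg (· % M) heq
      simp only [mul_comm _ M, Nat.mul_add_mod, Nat.mod_eq_of_lt d1,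
        Nat.mod_eq_of_lt d2] at h
      exact h
    have hmeq : S1 % q = S2 % q := by
      have : (S1 % q) * M = (S2 % q) * M := by omega
      exact Nat.eq_of_mul_eq_mul_right hMpos this
    by_contra hne
    -- WLOG handled by symmetry: assume S1 < S2 or S2 < S1
    have key : ∀ a b, a < m ^ n → b < m ^ n → a < b → a % q = b % q →
        σ a / q = σ b / q → False := by
      intro a b ha hb hab hmod hdq
      have hgap : q ≤ b - a := by
        have hdvd : q ∣ (b - a) := by
          exact Nat.dvd_of_mod_eq_zero (Nat.sub_mod_eq_zero_of_mod_eq hmod.symm)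
        exact Nat.le_of_dvd (by omega) hdvd
      rcases hmono with hmo | han
      · have := mono_gap hmo b hb a ha (le_of_lt hab)
        -- σ a + q ≤ σ b, so σ a / q < σ b / q
        have h1 : σ a + q ≤ σ b := by omega
        have : σ a / q + 1 ≤ σ b / q := by
          have := Nat.div_le_div_right (c := q) h1
          rwa [Nat.add_div_right _ hqpos] at this
        omega
      · have := anti_gap han b hb a ha (le_of_lt hab)
        have h1 : σ b + q ≤ σ a := by omega
        have : σ b / q + 1 ≤ σ a / q := by
          have := Nat.div_le_div_right (c := q) h1
          rwa [Nat.add_div_right _ hqpos] at this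
        omega
    rcases Nat.lt_or_ge S1 S2 with h | h
    · exact key S1 S2 hS1 hS2 h hmeq hdeq
    · exact key S2 S1 hS2 hS1 (by omega) hmeq.symm hdeq.symm
  exact ((Set.finite_Iio _).injOn_iff_bijOn_of_mapsTo hmaps).mp hinj
end
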